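/- Let B : ℝ² × ℝ² → ℝ² be the symmetric bilinear map B((u₁, u₂), (w₁, w₂)) = (2u₁w₁ + u₂w₂, u₁w₂ + u₂w₁). For a nonzero u = (u₁, u₂) ∈ ℝ², there exists a nonzero w ∈ ℝ² with B(u, w) = 0 if and only if u₂² = 2u₁², i.e. if and only if u is a scalar multiple of (1, √2) or of (1, −√2). -/
import Mathlib


/-- For the symmetric bilinear map `B((u₁,u₂),(w₁,w₂)) = (2u₁w₁ + u₂w₂, u₁w₂ + u₂w₁)`
(the second fundamental form of the normal section in the paper's example) and a nonzero
`u`, there is a nonzero `w` with `B(u,w) = 0` iff `u₂² = 2u₁²`, i.e. iff `u` is a scalar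
multiple of `(1, √2)` or of `(1, −√2)`. -/
theorem stmt17 (B : ℝ × ℝ → ℝ × ℝ → ℝ × ℝ)
    (hB : ∀ u w : ℝ × ℝ, B u w = (2 * u.1 * w.1 + u.2 * w.2, u.1 * w.2 + u.2 * w.1))
    (u : ℝ × ℝ) (hu : u ≠ 0) :
    ((∃ w : ℝ × ℝ, w ≠ 0 ∧ B u w = 0) ↔ u.2 ^ 2 = 2 * u.1 ^ 2) ∧
    (u.2 ^ 2 = 2 * u.1 ^ 2 ↔
      ∃ t : ℝ, u = t • ((1 : ℝ), Real.sqrt 2) ∨ u = t • ((1 : ℝ), -Real.sqrt 2)) := by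
  have hsq : Real.sqrt 2 ^ 2 = 2 := Real.sq_sqrt (by norm_num)
  constructor
  · constructor
    · rintro ⟨w, hw, hBw⟩
      rw [hB] at hBw
      have h1 : 2 * u.1 * w.1 + u.2 * w.2 = 0 := congrArg Prod.fst hBw
      have h2 : u.1 * w.2 + u.2 * w.1 = 0 := congrArg Prod.snd hBw
      have hw' : w.1 ≠ 0 ∨ w.2 ≠ 0 := by
        by_contra h
        push_neg at h
        exact hw (Prod.ext h.1 h.2)
      rcases hw' with h | h
      · have key : (u.2 ^ 2 - 2 * u.1 ^ 2) * w.1 = 0 := by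
          linear_combination u.2 * h2 - u.1 * h1
        rcases mul_eq_zero.mp key with h' | h'
        · linarith
        · exact absurd h' h
      · have key : (u.2 ^ 2 - 2 * u.1 ^ 2) * w.2 = 0 := by
          linear_combination u.2 * h1 - 2 * u.1 * h2
        rcases mul_eq_zero.mp key with h' | h'
        · linarith
        · exact absurd h' h
    · intro h
      refine ⟨(u.2, -2 * u.1), ?_, ?_⟩
      · intro hw0
        have h1 : u.2 = 0 := congrArg Prod.fst hw0
        have h2 : (-2 : ℝ) * u.1 = 0 := congrArg Prod.snd hw0
        have hu1 : u.1 = 0 := by linarith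
        exact hu (Prod.ext hu1 h1)
      · rw [hB]
        simp only [Prod.mk.injEq, Prod.mk_eq_zero]
        constructor
        · ring
        · linear_combination h
  · constructor
    · intro h
      have h2 : u.2 = Real.sqrt 2 * u.1 ∨ u.2 = -(Real.sqrt 2 * u.1) := by
        have : u.2 ^ 2 = (Real.sqrt 2 * u.1) ^ 2 := by
          rw [mul_pow, hsq]; linarith
        exact sq_eq_sq_iff_eq_or_eq_neg.mp this
      refine ⟨u.1, ?_⟩
      rcases h2 with h2 | h2
      · left
        ext
        · simp
        · simp [h2, mul_comm]
      · right
        ext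
        · simp
        · simp [h2, mul_comm]
    · rintro ⟨t, ht | ht⟩ <;> rw [ht] <;>
        simp [Prod.smul_def, smul_eq_mul, mul_pow, hsq] <;> ring
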